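/- Let G be a tree on n≥3 vertices and let η>0. Then for every positive definite matrix A with zeros at the non-edges of G, the matrix B defined by b_{ij}=a_{ij} if |a_{ij}|>η or i=j, and b_{ij}=0 otherwise, is positive definite. -/

import Mathlib

/-!
Let `H` be the graph of nonzero off-diagonal entries of `B`. Since `B` only deletes entries of `A`,
`H` is a subgraph of the forest `G`, so an edge of `G` whose endpoints are connected in `H` is
already an edge of `H` (every edge of a forest is a bridge). Hence `B` agrees with `A` inside each
connected component of `H` and vanishes across components: `B` is, up to a permutation, the block
diagonal matrix of the principal submatrices of `A` on these components, each of which is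
positive definite.
-/

open Matrix Finset

theorem SimpleGraph.IsAcyclic.adj_of_le_of_reachable {V : Type*} {G H : SimpleGraph V}
    (hG : G.IsAcyclic) (hHG : H ≤ G) {u v : V} (huv : G.Adj u v) (hreach : H.Reachable u v) :
    H.Adj u v := by
  by_contra hH
  refine isBridge_iff.mp (isAcyclic_iff_forall_adj_isBridge.mp hG huv) (hreach.mono ?_)
  refine fun a b hab => (deleteEdges_adj ..).mpr ⟨hHG hab, fun h => ?_⟩
  rcases Sym2.eq_iff.mp (Set.mem_singleton_iff.mp h) with ⟨rfl, rfl⟩ | ⟨rfl, rfl⟩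
  exacts [hH hab, hH hab.symm]

namespace Matrix

variable {ι κ R : Type*} [Ring R] [StarRing R]

theorem star_dotProduct_mulVec_sameFiber [Fintype ι] [DecidableEq κ] (A : Matrix ι ι R)
    (r : ι → κ) (x : ι → R) :
    star x ⬝ᵥ ((of fun i j => if r i = r j then A i j else 0) *ᵥ x) =
      ∑ c ∈ univ.image r, star ((r ⁻¹' {c}).indicator x) ⬝ᵥ (A *ᵥ (r ⁻¹' {c}).indicator x) := by
  simp only [dotProduct, mulVec, Pi.star_apply, of_apply, mul_sum]
  rw [eq_comm, sum_comm]
  refine sum_congr rfl fun i _ => ?_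
  rw [sum_comm]
  refine sum_congr rfl fun j _ => ?_
  rw [sum_eq_single_of_mem (r i) (mem_image_of_mem r (mem_univ i))]
  · by_cases h : r i = r j <;> simp [Set.indicator, h, eq_comm]
  · intro c _ hc
    simp [Set.indicator, Ne.symm hc]

theorem PosDef.sameFiber [Fintype ι] [PartialOrder R] [IsOrderedCancelAddMonoid R]
    [DecidableEq κ] {A : Matrix ι ι R} (hA : A.PosDef) (r : ι → κ) :
    (of fun i j => if r i = r j then A i j else 0).PosDef := by
  refine posDef_iff_dotProduct_mulVec.mpr ⟨?_, fun x hx => ?_⟩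
  · ext i j
    simp [eq_comm, apply_ite star, hA.isHermitian.apply]
  obtain ⟨i, hi⟩ := Function.ne_iff.mp hx
  rw [star_dotProduct_mulVec_sameFiber]
  refine sum_pos' (fun c _ => hA.posSemidef.dotProduct_mulVec_nonneg _)
    ⟨r i, mem_image_of_mem r (mem_univ i), hA.dotProduct_mulVec_pos fun h => hi ?_⟩
  simpa using congr_fun h i

theorem fromRel_ne_zero_adj_iff {B : Matrix ι ι R} (hB : B.IsHermitian) {i j : ι} :
    (SimpleGraph.fromRel fun i j => B i j ≠ 0).Adj i j ↔ i ≠ j ∧ B i j ≠ 0 := by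
  rw [SimpleGraph.fromRel_adj, ← hB.apply j i, star_ne_zero, or_self]

variable {G : SimpleGraph ι} {A B : Matrix ι ι R}

open Classical in
theorem eq_ite_reachable_of_isAcyclic (hG : G.IsAcyclic)
    (hAG : ∀ i j, i ≠ j → ¬G.Adj i j → A i j = 0) (hB : B.IsHermitian)
    (hdiag : ∀ i, B i i = A i i) (hBA : ∀ i j, B i j = A i j ∨ B i j = 0) (i j : ι) :
    B i j = if (SimpleGraph.fromRel fun i j => B i j ≠ 0).Reachable i j then A i j else 0 := by
  set H := SimpleGraph.fromRel fun i j => B i j ≠ 0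
  have hHG : H ≤ G := by
    intro i j hH
    obtain ⟨hij, hne⟩ := (fromRel_ne_zero_adj_iff hB).mp hH
    by_contra hG
    exact hne (((hBA i j).resolve_right hne).trans (hAG i j hij hG))
  split_ifs with hreach
  · by_cases hij : i = j
    · exact hij ▸ hdiag i
    by_cases hGij : G.Adj i j
    · exact (hBA i j).resolve_right ((fromRel_ne_zero_adj_iff hB).mp
        (hG.adj_of_le_of_reachable hHG hGij hreach)).2
    · rw [hAG i j hij hGij]
      exact (hBA i j).elim (·.trans (hAG i j hij hGij)) id
  · have hij : i ≠ j := by rintro rfl; exact hreach .rfl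
    by_contra hne
    exact hreach ((fromRel_ne_zero_adj_iff hB).mpr ⟨hij, hne⟩).reachable

theorem PosDef.of_eq_or_eq_zero_of_isAcyclic [Fintype ι] [PartialOrder R]
    [IsOrderedCancelAddMonoid R] (hG : G.IsAcyclic) (hA : A.PosDef)
    (hAG : ∀ i j, i ≠ j → ¬G.Adj i j → A i j = 0) (hB : B.IsHermitian)
    (hdiag : ∀ i, B i i = A i i) (hBA : ∀ i j, B i j = A i j ∨ B i j = 0) :
    B.PosDef := by
  classical
  convert hA.sameFiber (SimpleGraph.fromRel fun i j => B i j ≠ 0).connectedComponentMk using 1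
  ext i j
  rw [eq_ite_reachable_of_isAcyclic hG hAG hB hdiag hBA i j, of_apply]
  simp only [SimpleGraph.ConnectedComponent.eq]
  split_ifs <;> rfl

end Matrix

theorem stmt_14 {n : ℕ} (G : SimpleGraph (Fin n))
    (htree : G.IsTree) (η : ℝ)
    (A : Matrix (Fin n) (Fin n) ℝ) (hA : A.PosDef)
    (hzeros : ∀ i j : Fin n, i ≠ j → ¬ G.Adj i j → A i j = 0)
    (B : Matrix (Fin n) (Fin n) ℝ)
    (hB : ∀ i j : Fin n, B i j = if i = j ∨ η < |A i j| then A i j else 0) :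
    B.PosDef := by
  have hAsymm : A.IsSymm := isHermitian_iff_isSymm.mp hA.isHermitian
  have hBsymm : B.IsHermitian := by
    refine isHermitian_iff_isSymm.mpr (IsSymm.ext fun i j => ?_)
    simp only [hB, hAsymm.apply i j, eq_comm]
  refine hA.of_eq_or_eq_zero_of_isAcyclic htree.isAcyclic hzeros hBsymm (fun i => by simp [hB]) ?_
  intro i j
  rw [hB]
  split_ifs <;> simp
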